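/- arXiv:1602.02620 — 4 statements merged into one kernel-verified Lean document; each statement's English description precedes it below -/
import Mathlib

section
/- For every mapping m : [d] → {0,1}^{r+1}, the family of hash functions {g_v : v ∈ {0,1}^{r+1} \ {0}} defined by g_v(x) = g_v ∧ x, where the i-th bit of the vector g_v is ⟨m(i), v⟩ mod 2, is r-covering: for every pair x, y ∈ {0,1}^d with Hamming distance at most r, there exists a nonzero v such that g_v(x) = g_v(y). -/
/-- CoveringLSH is r-covering: for every mapping `m : [d] → {0,1}^{r+1}`, and every
`x y` with Hamming distance at most `r`, some nonzero `v` gives `g_v(x) = g_v(y)`,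
where `(g_v)_i = ⟨m(i), v⟩ mod 2` and `g_v(x) = g_v ∧ x`. -/
theorem stmt0 (d r : ℕ) (m : Fin d → Fin (r + 1) → ZMod 2)
    (x y : Fin d → ZMod 2) (hxy : hammingDist x y ≤ r) :
    ∃ v : Fin (r + 1) → ZMod 2, v ≠ 0 ∧
      ∀ i, (∑ j, m i j * v j) * x i = (∑ j, m i j * v j) * y i := by
  classical
  set S : Finset (Fin d) := Finset.univ.filter (fun i => x i ≠ y i) with hS
  have hcard : S.card ≤ r := by
    have : hammingDist x y = S.card := rfl
    omega
  -- linear map v ↦ (∑ j, m i j * v j)_{i ∈ S}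
  let A : S → Fin (r + 1) → ZMod 2 := fun i j => m i.1 j
  let L := Matrix.mulVecLin (Matrix.of A)
  have hni : ¬ Function.Injective L := by
    intro hinj
    have h1 := LinearMap.finrank_le_finrank_of_injective hinj
    simp only [Module.finrank_pi, Fintype.card_fin, Fintype.card_coe] at h1
    omega
  rw [Function.not_injective_iff] at hni
  obtain ⟨a, b, hab, hne⟩ := hni
  refine ⟨a - b, sub_ne_zero.mpr hne, fun i => ?_⟩
  by_cases hi : x i = y i
  · rw [hi]
  · have hiS : i ∈ S := by simp [hS, hi]
    have h0 : L (a - b) = 0 := by rw [map_sub, hab, sub_self]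
    have := congrFun h0 ⟨i, hiS⟩
    have hz : (∑ j, m i j * (a - b) j) = 0 := by
      simpa [L, A, Matrix.mulVecLin_apply, Matrix.mulVec, dotProduct,
        mul_comm] using this
    rw [hz, zero_mul, zero_mul]
end

section
/- For any two binary vectors x, y ∈ {0,1}^d and a uniformly random mapping m : [d] → {0,1}^{r+1}, the expected number of nonzero vectors v ∈ {0,1}^{r+1} \ {0} such that g_v(x) = g_v(y) is strictly less than 2^{r+1 - d(x,y)}, where d(x,y) is the Hamming distance. -/
open Finset

private lemma zmod2_ne_iff {a : ZMod 2} : a ≠ 0 ↔ a = 1 := by revert a; decide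

private lemma zmod2_mul_iff {a b : ZMod 2} (h : ¬ a = b) (s : ZMod 2) :
    s * a = s * b ↔ s = 0 := by revert h; revert a b s; decide

private lemma ker_card (r : ℕ) (v : Fin (r + 1) → ZMod 2) (hv : v ≠ 0) :
    (univ.filter fun w : Fin (r + 1) → ZMod 2 => ∑ j, w j * v j = 0).card = 2 ^ r := by
  obtain ⟨j₀, hj⟩ : ∃ j, v j ≠ 0 := by
    by_contra h; push_neg at h; exact hv (funext h)
  have hv1 : v j₀ = 1 := zmod2_ne_iff.mp hj
  set δ : Fin (r + 1) → ZMod 2 := fun j => if j = j₀ then 1 else 0 with hδdef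
  have hδ : ∀ w : Fin (r + 1) → ZMod 2, ∑ j, (w + δ) j * v j = (∑ j, w j * v j) + 1 := by
    intro w
    simp only [Pi.add_apply, add_mul, Finset.sum_add_distrib, hδdef, ite_mul, one_mul, zero_mul,
      Finset.sum_ite_eq', Finset.mem_univ, if_true, hv1]
  have hδδ : δ + δ = 0 := by funext j; exact CharTwo.add_self_eq_zero _
  have hinv : ∀ w : Fin (r + 1) → ZMod 2, w + δ + δ = w := by
    intro w; rw [add_assoc, hδδ, add_zero]
  have hcard : (univ.filter fun w : Fin (r + 1) → ZMod 2 => ∑ j, w j * v j = 0).card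
      = (univ.filter fun w : Fin (r + 1) → ZMod 2 => ¬ (∑ j, w j * v j = 0)).card := by
    apply Finset.card_bij' (fun w _ => w + δ) (fun w _ => w + δ)
    · intro w hw
      simp only [mem_filter, mem_univ, true_and] at hw ⊢
      rw [hδ, hw]; decide
    · intro w hw
      simp only [mem_filter, mem_univ, true_and] at hw ⊢
      rw [hδ, zmod2_ne_iff.mp hw]; decide
    · intro w _; exact hinv w
    · intro w _; exact hinv w
  have htot := Finset.card_filter_add_card_filter_not
    (s := (univ : Finset (Fin (r + 1) → ZMod 2)))
    (p := fun w => ∑ j, w j * v j = 0)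
  have huniv : (univ : Finset (Fin (r + 1) → ZMod 2)).card = 2 ^ (r + 1) := by
    simp [Finset.card_univ, Fintype.card_fun, ZMod.card]
  rw [huniv] at htot
  have h2 : 2 ^ (r + 1) = 2 * 2 ^ r := by rw [pow_succ]; ring
  rw [← hcard, h2] at htot
  clear_value δ
  clear hδ hδδ hinv hδdef hj hv1 hcard hv h2 huniv δ
  generalize hA : (univ.filter fun w : Fin (r + 1) → ZMod 2 => ∑ j, w j * v j = 0).card = A
      at htot ⊢
  clear hA
  omega

private lemma coord_card (d r : ℕ) (x y : Fin d → ZMod 2) (v : Fin (r + 1) → ZMod 2)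
    (hv : v ≠ 0) (i : Fin d) :
    (univ.filter fun w : Fin (r + 1) → ZMod 2 =>
        (∑ j, w j * v j) * x i = (∑ j, w j * v j) * y i).card
      = if x i = y i then 2 ^ (r + 1) else 2 ^ r := by
  by_cases h : x i = y i
  · rw [if_pos h]
    rw [Finset.filter_true_of_mem (fun w _ => by rw [h])]
    simp [Finset.card_univ, Fintype.card_fun, ZMod.card]
  · rw [if_neg h]
    rw [Finset.filter_congr (fun w _ => zmod2_mul_iff h _)]
    exact ker_card r v hv

private lemma m_card (d r : ℕ) (x y : Fin d → ZMod 2) (v : Fin (r + 1) → ZMod 2)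
    (hv : v ≠ 0) :
    (univ.filter fun m : Fin d → Fin (r + 1) → ZMod 2 =>
        ∀ i, (∑ j, m i j * v j) * x i = (∑ j, m i j * v j) * y i).card
      = ∏ i, (if x i = y i then 2 ^ (r + 1) else 2 ^ r) := by
  rw [← Fintype.card_subtype]
  rw [Fintype.card_congr (Equiv.subtypePiEquivPi
    (p := fun i (w : Fin (r + 1) → ZMod 2) =>
      (∑ j, w j * v j) * x i = (∑ j, w j * v j) * y i))]
  rw [Fintype.card_pi]
  exact Finset.prod_congr rfl fun i _ => by
    rw [Fintype.card_subtype, coord_card d r x y v hv i]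

/-- For a uniformly random mapping `m : [d] → {0,1}^{r+1}`, the expected number of
nonzero `v` with `g_v(x) = g_v(y)` is strictly less than `2^{r+1-d(x,y)}`. -/
theorem stmt1 (d r : ℕ) (x y : Fin d → ZMod 2) :
    (∑ m : Fin d → Fin (r + 1) → ZMod 2,
        ((Finset.univ.filter (fun v : Fin (r + 1) → ZMod 2 => v ≠ 0 ∧
            ∀ i, (∑ j, m i j * v j) * x i = (∑ j, m i j * v j) * y i)).card : ℝ))
      / (Fintype.card (Fin d → Fin (r + 1) → ZMod 2) : ℝ)
      < (2 : ℝ) ^ ((r + 1 : ℤ) - (hammingDist x y : ℤ)) := by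
  set D := hammingDist x y with hDdef
  have hD : D ≤ d := by
    have := hammingDist_le_card_fintype (x := x) (y := y)
    simpa using this
  set E := (r + 1) * (d - D) + r * D with hE
  have hswap : (∑ m : Fin d → Fin (r + 1) → ZMod 2,
        (Finset.univ.filter (fun v : Fin (r + 1) → ZMod 2 => v ≠ 0 ∧
            ∀ i, (∑ j, m i j * v j) * x i = (∑ j, m i j * v j) * y i)).card)
      = ∑ v : Fin (r + 1) → ZMod 2,
          (Finset.univ.filter (fun m : Fin d → Fin (r + 1) → ZMod 2 => v ≠ 0 ∧
            ∀ i, (∑ j, m i j * v j) * x i = (∑ j, m i j * v j) * y i)).card := by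
    simp_rw [Finset.card_filter]
    exact Finset.sum_comm
  have hK : ∀ v : Fin (r + 1) → ZMod 2,
      (Finset.univ.filter (fun m : Fin d → Fin (r + 1) → ZMod 2 => v ≠ 0 ∧
          ∀ i, (∑ j, m i j * v j) * x i = (∑ j, m i j * v j) * y i)).card
        = if v = 0 then 0 else 2 ^ E := by
    intro v
    by_cases hv : v = 0
    · rw [if_pos hv, Finset.filter_false_of_mem, Finset.card_empty]
      intro m _ h
      exact h.1 hv
    · rw [if_neg hv]
      have heq : (Finset.univ.filter (fun m : Fin d → Fin (r + 1) → ZMod 2 => v ≠ 0 ∧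
            ∀ i, (∑ j, m i j * v j) * x i = (∑ j, m i j * v j) * y i))
          = (Finset.univ.filter (fun m : Fin d → Fin (r + 1) → ZMod 2 =>
            ∀ i, (∑ j, m i j * v j) * x i = (∑ j, m i j * v j) * y i)) := by
        apply Finset.filter_congr
        intro m _
        exact and_iff_right hv
      rw [heq, m_card d r x y v hv]
      rw [Finset.prod_ite, Finset.prod_const, Finset.prod_const, ← pow_mul, ← pow_mul,
        ← pow_add]
      congr 1
      have h1 : (univ.filter fun i => ¬ x i = y i).card = D := rfl
      have h2 := Finset.card_filter_add_card_filter_not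
        (s := (univ : Finset (Fin d))) (p := fun i => x i = y i)
      rw [h1, Finset.card_univ, Fintype.card_fin] at h2
      rw [h1, hE]
      have hB : (univ.filter fun i => x i = y i).card = d - D :=
        Nat.eq_sub_of_add_eq h2
      rw [hB]
  have htotn : (∑ m : Fin d → Fin (r + 1) → ZMod 2,
        (Finset.univ.filter (fun v : Fin (r + 1) → ZMod 2 => v ≠ 0 ∧
            ∀ i, (∑ j, m i j * v j) * x i = (∑ j, m i j * v j) * y i)).card)
      = (2 ^ (r + 1) - 1) * 2 ^ E := by
    rw [hswap]
    simp_rw [hK]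
    rw [Finset.sum_ite, Finset.sum_const, Finset.sum_const, smul_zero, zero_add, smul_eq_mul]
    have hfe : (univ.filter fun v : Fin (r + 1) → ZMod 2 => ¬ v = 0) = univ.erase 0 := by
      ext v; simp [and_comm]
    rw [hfe, Finset.card_erase_of_mem (Finset.mem_univ _), Finset.card_univ,
      Fintype.card_fun, ZMod.card, Fintype.card_fin]
  have hcardM : (Fintype.card (Fin d → Fin (r + 1) → ZMod 2) : ℝ)
      = (2 : ℝ) ^ ((r + 1) * d) := by
    rw [Fintype.card_fun, Fintype.card_fun, ZMod.card, Fintype.card_fin, Fintype.card_fin,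
      ← pow_mul]
    push_cast
    ring
  rw [← Nat.cast_sum, htotn, hcardM, div_lt_iff₀ (by positivity)]
  have h1le : (1 : ℕ) ≤ 2 ^ (r + 1) := Nat.one_le_two_pow
  push_cast [Nat.cast_sub h1le]
  calc ((2 : ℝ) ^ (r + 1) - 1) * 2 ^ E < 2 ^ (r + 1) * 2 ^ E := by
        have hpos : (0 : ℝ) < 2 ^ E := by positivity
        have : (2 : ℝ) ^ (r + 1) - 1 < 2 ^ (r + 1) := by linarith
        exact mul_lt_mul_of_pos_right this hpos
    _ = 2 ^ ((r : ℤ) + 1 - (D : ℤ)) * 2 ^ ((r + 1) * d) := by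
        rw [← zpow_natCast (2 : ℝ) (r + 1), ← zpow_natCast (2 : ℝ) E,
          ← zpow_natCast (2 : ℝ) ((r + 1) * d), ← zpow_add₀ (two_ne_zero), ← zpow_add₀ (two_ne_zero)]
        congr 1
        rw [hE]
        push_cast [Nat.cast_sub hD]
        ring
end

section
/- Fix a prime P, a seed vector b ∈ [P]^d, a mapping m : [d] → {0,1}^{r+1}, and a binary vector q ∈ {0,1}^d. Let q̃_i = q_i b_i, let t ∈ ℤ^{2^{r+1}} be defined by t_j = Σ_{i : m(i) = j} q̃_i, and let H be the 2^{r+1} × 2^{r+1} ±1 Hadamard matrix with H_{v,j} = (-1)^{⟨j,v⟩}. Then for every v ∈ {0,1}^{r+1}, the universal-hash value Σ_{i=1}^d b_i · (g_v ∧ q)_i equals ½(Σ_i q̃_i − (H t)_v), where (g_v)_i = ⟨m(i), v⟩ mod 2. -/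
/-! For a bit `x`, `(-1)^x = 1 - 2x`, so each term `b_i (g_v ∧ q)_i` equals
`½(q̃_i - (-1)^{⟨m(i),v⟩} q̃_i)`; grouping the signed terms by the value of `m(i)` turns
`Σ_i (-1)^{⟨m(i),v⟩} q̃_i` into the Hadamard coefficient `(H t)_v`. -/

open Finset

theorem ZMod.cast_val_mul_eq_sub_neg_one_pow_mul_div_two {K : Type*} [Field K] [CharZero K]
    (x y : ZMod 2) :
    ((x * y).val : K) = (y.val - (-1) ^ x.val * y.val) / 2 := by
  rw [ZMod.val_mul]
  have hx : x.val < 2 := ZMod.val_lt x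
  have hy : y.val < 2 := ZMod.val_lt y
  interval_cases x.val <;> interval_cases y.val <;> norm_num

theorem Finset.sum_mul_sum_fiberwise {ι κ R : Type*} [Fintype ι] [Fintype κ] [DecidableEq κ]
    [NonUnitalNonAssocSemiring R] (g : ι → κ) (φ : κ → R) (f : ι → R) :
    ∑ a, φ a * ∑ i ∈ univ.filter (fun i => g i = a), f i = ∑ i, φ (g i) * f i := by
  rw [← sum_fiberwise univ g (fun i => φ (g i) * f i)]
  refine sum_congr rfl fun a _ => ?_
  rw [mul_sum]
  exact sum_congr rfl fun i hi => by rw [(mem_filter.mp hi).2]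

theorem stmt10_general (d r : ℕ) (b : Fin d → ℕ)
    (m : Fin d → Fin (r + 1) → ZMod 2) (q : Fin d → ZMod 2)
    (v : Fin (r + 1) → ZMod 2) :
    (∑ i, (b i : ℚ) * (((∑ j, m i j * v j) * q i : ZMod 2).val : ℚ))
      = ((∑ i, ((q i).val : ℚ) * (b i : ℚ))
          - ∑ a : Fin (r + 1) → ZMod 2,
              (-1 : ℚ) ^ ((∑ j, a j * v j : ZMod 2).val)
                * (∑ i ∈ Finset.univ.filter (fun i => m i = a),
                    ((q i).val : ℚ) * (b i : ℚ))) / 2 := by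
  rw [sum_mul_sum_fiberwise m (fun a => (-1 : ℚ) ^ (∑ j, a j * v j : ZMod 2).val),
    ← sum_sub_distrib, sum_div]
  refine sum_congr rfl fun i _ => ?_
  rw [ZMod.cast_val_mul_eq_sub_neg_one_pow_mul_div_two]
  ring

/-- The FHT-based computation produces the same integer hash values as applying the
universal hash `p(x) = Σ b_i x_i` to each binary hash value `g_v ∧ q`:
`Σ_i b_i (g_v ∧ q)_i = ½(Σ_i q̃_i − (H t)_v)`, where `q̃_i = q_i b_i` and
`t_j = Σ_{i : m(i)=j} q̃_i`. -/
theorem stmt10 (d r P : ℕ) (hP : P.Prime) (b : Fin d → ℕ) (hb : ∀ i, b i < P)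
    (m : Fin d → Fin (r + 1) → ZMod 2) (q : Fin d → ZMod 2)
    (v : Fin (r + 1) → ZMod 2) :
    (∑ i, (b i : ℚ) * (((∑ j, m i j * v j) * q i : ZMod 2).val : ℚ))
      = ((∑ i, ((q i).val : ℚ) * (b i : ℚ))
          - ∑ a : Fin (r + 1) → ZMod 2,
              (-1 : ℚ) ^ ((∑ j, a j * v j : ZMod 2).val)
                * (∑ i ∈ Finset.univ.filter (fun i => m i = a),
                    ((q i).val : ℚ) * (b i : ℚ))) / 2 :=
  stmt10_general d r b m q v
end

section
/- Under the partitioning scheme into t parts with a uniformly random assignment of each coordinate to one of t parts, and applying within each part a covering family where a fixed hash function zeroes each differing coordinate independently with probability 1/2, the probability that two points x, y at distance d(x,y) collide under a fixed hash function of a fixed part is at most (1 − 1/(2t))^{d(x,y)}. -/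
lemma aux_card_pair (t : ℕ) (j : Fin t) :
    (Finset.univ.filter (fun z : Fin t × ZMod 2 => z.1 = j → z.2 = 0)).card
      = 2 * t - 1 := by
  classical
  have h1 : (Finset.univ.filter (fun z : Fin t × ZMod 2 => ¬ (z.1 = j → z.2 = 0))).card = 1 := by
    have : (Finset.univ.filter (fun z : Fin t × ZMod 2 => ¬ (z.1 = j → z.2 = 0)))
        = (Finset.univ.filter (fun a : Fin t => a = j)) ×ˢ
          (Finset.univ.filter (fun b : ZMod 2 => ¬ b = 0)) := by
      ext z
      simp [Finset.mem_filter, Finset.mem_product, _root_.not_imp, and_comm]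
    rw [this, Finset.card_product]
    have hj : (Finset.univ.filter (fun a : Fin t => a = j)).card = 1 := by
      simp [Finset.filter_eq']
    have hb : (Finset.univ.filter (fun b : ZMod 2 => ¬ b = 0)).card = 1 := by
      decide
    rw [hj, hb]
  have h2 := Finset.card_filter_add_card_filter_not
    (s := (Finset.univ : Finset (Fin t × ZMod 2)))
    (p := fun z : Fin t × ZMod 2 => z.1 = j → z.2 = 0)
  have hcard : (Finset.univ : Finset (Fin t × ZMod 2)).card = 2 * t := by
    simp [Finset.card_univ, mul_comm]
  omega

/-- Partitioning scheme: with a uniformly random assignment of each coordinate to one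
of `t` parts and an independent uniform hash bit per coordinate, the probability
that `x` and `y` collide under the hash function of a fixed part `j` (i.e., every
differing coordinate assigned to part `j` is zeroed) is at most
`(1 − 1/(2t))^{d(x,y)}`. -/
theorem stmt18 (d t : ℕ) (ht : 0 < t) (x y : Fin d → ZMod 2) (j : Fin t) :
    ((Finset.univ.filter (fun ω : Fin d → Fin t × ZMod 2 =>
        ∀ i, x i ≠ y i → (ω i).1 = j → (ω i).2 = 0)).card : ℝ)
      / (Fintype.card (Fin d → Fin t × ZMod 2) : ℝ)
      ≤ (1 - 1 / (2 * (t : ℝ))) ^ (hammingDist x y) := by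
  classical
  set P : ∀ _ : Fin d, Fin t × ZMod 2 → Prop :=
    fun i z => x i ≠ y i → z.1 = j → z.2 = 0 with hP
  clear_value P
  have hcardfilter :
      (Finset.univ.filter (fun ω : Fin d → Fin t × ZMod 2 => ∀ i, P i (ω i))).card
        = ∏ i, (Finset.univ.filter (P i)).card := by
    rw [← Fintype.card_subtype]
    rw [Fintype.card_congr (Equiv.subtypePiEquivPi (p := P))]
    rw [Fintype.card_pi]
    congr 1
    ext i
    rw [Fintype.card_subtype]
  have hper : ∀ i, (Finset.univ.filter (P i)).card
      = if x i = y i then 2 * t else 2 * t - 1 := by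
    intro i
    by_cases h : x i = y i
    · rw [if_pos h]
      have he : Finset.univ.filter (P i) = Finset.univ := by
        ext z; simp [hP, h]
      rw [he]
      simp [Finset.card_univ, mul_comm]
    · rw [if_neg h]
      have he : Finset.univ.filter (P i)
          = Finset.univ.filter (fun z : Fin t × ZMod 2 => z.1 = j → z.2 = 0) := by
        ext z; simp [hP, h]
      rw [he, aux_card_pair]
  set k := hammingDist x y with hk
  clear_value k
  have hkd : k ≤ d := by
    rw [hk]; simpa using (hammingDist_le_card_fintype (x := x) (y := y))
  have hprod : ∏ i, (Finset.univ.filter (P i)).card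
      = (2 * t - 1) ^ k * (2 * t) ^ (d - k) := by
    calc ∏ i, (Finset.univ.filter (P i)).card
        = ∏ i, (if x i = y i then 2 * t else 2 * t - 1) := by
          exact Finset.prod_congr rfl (fun i _ => hper i)
      _ = (2 * t - 1) ^ k * (2 * t) ^ (d - k) := by
          rw [Finset.prod_ite, Finset.prod_const, Finset.prod_const]
          have h1 : (Finset.univ.filter (fun i => ¬ x i = y i)).card = k := by
            simp [hk, hammingDist, ne_eq]
          have h2 : (Finset.univ.filter (fun i => x i = y i)).card = d - k := by
            have := Finset.card_filter_add_card_filter_not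
              (s := (Finset.univ : Finset (Fin d))) (p := fun i => x i = y i)
            simp only [Finset.card_univ, Fintype.card_fin] at this
            clear hcardfilter hper
            omega
          rw [h1, h2, mul_comm]
  have hmain :
      (Finset.univ.filter (fun ω : Fin d → Fin t × ZMod 2 => ∀ i, P i (ω i))).card
        = (2 * t - 1) ^ k * (2 * t) ^ (d - k) := by
    rw [hcardfilter, hprod]
  have hcardU : (Fintype.card (Fin d → Fin t × ZMod 2)) = (2 * t) ^ d := by
    simp [mul_comm]
  simp only [hP] at hmain
  rw [hmain, hcardU]
  clear hmain hcardfilter hprod hper hcardU hP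
  have ht' : (0:ℝ) < 2 * t := by positivity
  have hcast : ((2 * t - 1 : ℕ) : ℝ) = 2 * t - 1 := by
    have : 1 ≤ 2 * t := by omega
    push_cast [this]
    ring
  have hrhs : (1 - 1 / (2 * (t:ℝ))) = (2 * t - 1) / (2 * t) := by
    field_simp
  rw [hrhs]
  push_cast [hcast]
  rw [div_pow]
  have hexp : (2 * (t:ℝ)) ^ d = (2 * t) ^ k * (2 * t) ^ (d - k) := by
    rw [← pow_add]
    congr 1
    omega
  rw [hexp]
  rw [mul_div_mul_comm]
  have hpos2 : (0:ℝ) < (2 * (t:ℝ)) ^ (d - k) := by positivity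
  rw [div_self (ne_of_gt hpos2), mul_one]
end
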